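/- Let Θ : A* → A* be an involutive antimorphism and let u ∈ A^ℕ be an eventually periodic infinite word whose language is closed under Θ. Then u is purely periodic, i.e., there exists a positive integer T such that u_{n+T} = u_n for all n ∈ ℕ. -/
import Mathlib


/-!
Basic notions from combinatorics on words: involutive antimorphisms,
Θ-palindromes, factors of infinite words, palindromic defect, richness.
-/

/-- `Θ` is an involutive antimorphism of the free monoid `A*` (words as lists). -/
def IsAntimorphism {A : Type*} (Θ : List A → List A) : Prop :=
  (∀ x y : List A, Θ (x ++ y) = Θ y ++ Θ x) ∧ ∀ x : List A, Θ (Θ x) = x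

/-- The factor `u_i u_{i+1} … u_{i+n-1}` of the infinite word `u`. -/
def factorAt {A : Type*} (u : ℕ → A) (i n : ℕ) : List A :=
  (List.range n).map fun k => u (i + k)

/-- `i` is an occurrence of `w` in the infinite word `u`. -/
def OccursAt {A : Type*} (u : ℕ → A) (w : List A) (i : ℕ) : Prop :=
  w = factorAt u i w.length

/-- `w` is a factor of the infinite word `u`. -/
def IsFactorOf {A : Type*} (w : List A) (u : ℕ → A) : Prop :=
  ∃ i, OccursAt u w i

/-- The prefix of length `n` of the infinite word `u`. -/
def prefixWord {A : Type*} (u : ℕ → A) (n : ℕ) : List A :=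
  factorAt u 0 n

/-- `u` is recurrent: every factor has infinitely many occurrences. -/
def Recurrent {A : Type*} (u : ℕ → A) : Prop :=
  ∀ w, IsFactorOf w u → ∀ N, ∃ i, N ≤ i ∧ OccursAt u w i

/-- `u` is uniformly recurrent: every factor occurs with bounded gaps
(equivalently, every factor has finitely many return words). -/
def UniformlyRecurrent {A : Type*} (u : ℕ → A) : Prop :=
  ∀ w, IsFactorOf w u → ∃ R, ∀ N, ∃ i, N ≤ i ∧ i < N + R ∧ OccursAt u w i

/-- `i` is an occurrence of the word `s` in the finite word `r`. -/
def OccursIn {A : Type*} (s r : List A) (i : ℕ) : Prop :=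
  i + s.length ≤ r.length ∧ s = (r.drop i).take s.length

/-- `s` occurs exactly once in `r`. -/
def Unioccurrent {A : Type*} (s r : List A) : Prop :=
  Set.ncard {i | OccursIn s r i} = 1

/-- The set `Pal_Θ(w)` of `Θ`-palindromic factors of the finite word `w`
(the empty word included). -/
def palSet {A : Type*} (Θ : List A → List A) (w : List A) : Set (List A) :=
  {p | p <:+: w ∧ Θ p = p}

/-- `γ_Θ(w)`: the number of pairs `{a, Θ(a)}` where `a` is a letter occurring
in `w` with `a ≠ Θ(a)`. -/
noncomputable def gammaTheta {A : Type*} (Θ : List A → List A) (w : List A) : ℕ :=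
  Set.ncard {P : Set A | ∃ a, a ∈ w ∧ Θ [a] ≠ [a] ∧ P = {b | [b] = [a] ∨ [b] = Θ [a]}}

/-- The `Θ`-palindromic defect `D_Θ(w) = |w| + 1 - γ_Θ(w) - #Pal_Θ(w)` of a finite word. -/
noncomputable def defect {A : Type*} (Θ : List A → List A) (w : List A) : ℤ :=
  (w.length : ℤ) + 1 - gammaTheta Θ w - (palSet Θ w).ncard

/-- The infinite word `u` has finite `Θ`-palindromic defect
(`D_Θ(u) = sup { D_Θ(w) : w factor of u } < ∞`), i.e. `u` is almost `Θ`-rich. -/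
def FiniteDefect {A : Type*} (Θ : List A → List A) (u : ℕ → A) : Prop :=
  ∃ C : ℤ, ∀ w, IsFactorOf w u → defect Θ w ≤ C

/-- The infinite word `u` is `Θ`-rich: every factor `w` satisfies
`#Pal_Θ(w) = |w| + 1 - γ_Θ(w)`, i.e. has zero `Θ`-defect. -/
def RichWord {A : Type*} (Θ : List A → List A) (u : ℕ → A) : Prop :=
  ∀ w, IsFactorOf w u → defect Θ w = 0

/-- The language of `u` is closed under `Θ`. -/
def LangClosedUnder {A : Type*} (Θ : List A → List A) (u : ℕ → A) : Prop :=
  ∀ w, IsFactorOf w u → IsFactorOf (Θ w) u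

/-- `u` is the image of the infinite word `v` under the monoid morphism
`B* → A*` determined by `φ` on letters, i.e. `u = φ(v₀)φ(v₁)φ(v₂)…`. -/
def IsMorphicImage {A B : Type*} (u : ℕ → A) (φ : B → List A) (v : ℕ → B) : Prop :=
  (∀ n, OccursAt u ((prefixWord v n).flatMap φ) 0) ∧
    ∀ N, ∃ n, N ≤ ((prefixWord v n).flatMap φ).length

/-- The occurrences of `w` and `w'` in `u` alternate: listing in increasing order
all occurrences of `w` or `w'`, consecutive indices are alternately occurrences
of `w` and of `w'` (between two occurrences of one of them, the second of which is
not an occurrence of the other, there is an occurrence of the other). -/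
def AlternateIn {A : Type*} (u : ℕ → A) (w w' : List A) : Prop :=
  (∀ i j, i < j → OccursAt u w i → OccursAt u w j → ¬ OccursAt u w' j →
    ∃ k, i < k ∧ k < j ∧ OccursAt u w' k) ∧
  (∀ i j, i < j → OccursAt u w' i → OccursAt u w' j → ¬ OccursAt u w j →
    ∃ k, i < k ∧ k < j ∧ OccursAt u w k)

/-- Factor complexity `C(n)` of the infinite word `u`. -/
noncomputable def complexity {A : Type*} (u : ℕ → A) (n : ℕ) : ℕ :=
  Set.ncard {w : List A | IsFactorOf w u ∧ w.length = n}

/-- `Θ`-palindromic complexity `P_Θ(n)` of the infinite word `u`. -/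
noncomputable def palComplexity {A : Type*} (Θ : List A → List A) (u : ℕ → A) (n : ℕ) : ℕ :=
  Set.ncard {w : List A | IsFactorOf w u ∧ w.length = n ∧ Θ w = w}

/-- `r` is a complete return word of `w` in `u`: a factor of `u` with exactly two
occurrences of `w`, one as a prefix and one as a suffix. -/
def IsCompleteReturnWord {A : Type*} (u : ℕ → A) (w r : List A) : Prop :=
  IsFactorOf r u ∧ w <+: r ∧ w <:+ r ∧ Set.ncard {i | OccursIn w r i} = 2


section Aux
variable {A : Type*}

lemma factorAt_length (u : ℕ → A) (i n : ℕ) : (factorAt u i n).length = n := by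
  simp [factorAt]

lemma factorAt_getElem (u : ℕ → A) (i n k : ℕ) (h : k < n) :
    (factorAt u i n)[k]'(by simpa [factorAt] using h) = u (i + k) := by
  simp [factorAt]

lemma occursAt_iff (u : ℕ → A) (w : List A) (i : ℕ) :
    OccursAt u w i ↔ ∀ k (h : k < w.length), w[k] = u (i + k) := by
  constructor
  · intro h k hk
    rw [List.getElem_of_eq h hk]
    exact factorAt_getElem u i w.length k hk
  · intro h
    unfold OccursAt
    apply List.ext_getElem
    · simp [factorAt]
    · intro k h1 h2
      rw [factorAt_getElem u i w.length k (by simpa [factorAt] using h2)]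
      exact h k h1

lemma occursAt_factorAt (u : ℕ → A) (i n : ℕ) : OccursAt u (factorAt u i n) i := by
  unfold OccursAt
  rw [factorAt_length]

lemma factorAt_add (u : ℕ → A) (i m n : ℕ) :
    factorAt u i (m + n) = factorAt u i m ++ factorAt u (i + m) n := by
  unfold factorAt
  rw [List.range_add, List.map_append, List.map_map]
  congr 1
  apply List.map_congr_left
  intro k _
  simp [Nat.add_assoc, Nat.add_comm m k]

lemma occursAt_middle (u : ℕ → A) (a w b : List A) (m : ℕ)
    (h : OccursAt u (a ++ w ++ b) m) : OccursAt u w (m + a.length) := by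
  unfold OccursAt at h ⊢
  rw [show (a ++ w ++ b).length = a.length + w.length + b.length by simp; omega] at h
  rw [factorAt_add u m (a.length + w.length) b.length,
    factorAt_add u m a.length w.length] at h
  have h1 : a ++ w = factorAt u m a.length ++ factorAt u (m + a.length) w.length :=
    List.append_inj_left h (by simp [factorAt_length])
  exact List.append_inj_right h1 (by simp [factorAt_length])

section Theta
variable {Θ : List A → List A} (hΘ : IsAntimorphism Θ)

include hΘ

lemma theta_nil : Θ [] = [] := by
  have h := hΘ.1 [] []
  simp only [List.append_nil] at h
  have hl := congrArg List.length h
  simp only [List.length_append] at hl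
  have : (Θ ([] : List A)).length = 0 := by omega
  exact List.eq_nil_of_length_eq_zero this

lemma theta_len_ge (w : List A) : w.length ≤ (Θ w).length := by
  induction w with
  | nil => simp
  | cons a t ih =>
    have h : Θ (a :: t) = Θ t ++ Θ [a] := by
      have := hΘ.1 [a] t
      simpa using this
    have h1 : 1 ≤ (Θ [a]).length := by
      by_contra hc
      have : Θ [a] = [] := by
        cases e : Θ [a] with
        | nil => rfl
        | cons x xs => rw [e] at hc; simp at hc
      have h2 := hΘ.2 [a]
      rw [this, theta_nil hΘ] at h2
      exact absurd h2 (by simp)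
    rw [h]
    simp
    omega

lemma theta_len (w : List A) : (Θ w).length = w.length := by
  have h1 := theta_len_ge hΘ w
  have h2 := theta_len_ge hΘ (Θ w)
  rw [hΘ.2] at h2
  omega

end Theta
end Aux

/-- An eventually periodic infinite word whose language is closed under `Θ` is
purely periodic. -/
theorem purely_periodic_of_eventually_periodic_lang_closed
    {A : Type*} [Fintype A] (Θ : List A → List A) (hΘ : IsAntimorphism Θ)
    (u : ℕ → A)
    (hper : ∃ N T : ℕ, 0 < T ∧ ∀ n : ℕ, N ≤ n → u (n + T) = u n)
    (hcl : LangClosedUnder Θ u) :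
    ∃ T : ℕ, 0 < T ∧ ∀ n : ℕ, u (n + T) = u n := by
  obtain ⟨N, T, hT, hp⟩ := hper
  refine ⟨T, hT, ?_⟩
  set L := N + T with hL
  set p := factorAt u 0 L with hpdef
  have hplen : p.length = L := factorAt_length u 0 L
  have hpfac : IsFactorOf p u := ⟨0, occursAt_factorAt u 0 L⟩
  obtain ⟨j, hj⟩ := hcl p hpfac
  have hΘplen : (Θ p).length = L := by rw [theta_len hΘ, hplen]
  have hΘpeq : Θ p = factorAt u j L := by
    have := hj
    unfold OccursAt at this
    rwa [hΘplen] at this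
  set a := factorAt u 0 j with hadef
  set b := factorAt u (j + L) N with hbdef
  have hq : factorAt u 0 (j + L + N) = a ++ Θ p ++ b := by
    rw [factorAt_add u 0 (j + L) N, factorAt_add u 0 j L]
    simp only [Nat.zero_add]
    rw [hΘpeq]
  have hqfac : IsFactorOf (a ++ Θ p ++ b) u := by
    rw [← hq]; exact ⟨0, occursAt_factorAt u 0 _⟩
  obtain ⟨m, hm⟩ := hcl _ hqfac
  have hΘq : Θ (a ++ Θ p ++ b) = Θ b ++ p ++ Θ a := by
    rw [hΘ.1 (a ++ Θ p) b, hΘ.1 a (Θ p), hΘ.2 p, ← List.append_assoc]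
  rw [hΘq] at hm
  have hocc : OccursAt u p (m + ((Θ b) ++ p).length - p.length) := by
    have h1 : Θ b ++ p ++ Θ a = Θ b ++ p ++ Θ a := rfl
    have := occursAt_middle u (Θ b) p (Θ a) m hm
    have hlen : m + ((Θ b) ++ p).length - p.length = m + (Θ b).length := by
      simp; omega
    rwa [hlen]
  have hblen : (Θ b).length = N := by rw [theta_len hΘ]; exact factorAt_length u _ _
  rw [show m + ((Θ b) ++ p).length - p.length = m + (Θ b).length by simp; omega, hblen] at hocc
  set i := m + N with hidef
  have hiN : N ≤ i := by omega
  have key : ∀ k, k < L → u k = u (i + k) := by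
    intro k hk
    have h1 := (occursAt_iff u p i).mp hocc k (by omega)
    have h2 : p[k]'(by omega) = u (0 + k) := factorAt_getElem u 0 L k hk
    rw [Nat.zero_add] at h2
    rw [← h2, h1]
  intro n
  rcases Nat.lt_or_ge n N with hn | hn
  · have k1 : u n = u (i + n) := key n (by omega)
    have k2 : u (n + T) = u (i + (n + T)) := key (n + T) (by omega)
    have k3 : u (i + n + T) = u (i + n) := hp (i + n) (by omega)
    rw [k2, ← Nat.add_assoc, k3, ← k1]
  · exact hp n hn
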